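/- Let K be a simplicial complex on vertex set contained in [m], let σ ∈ K and ω ⊆ [m] with σ ∩ ω = ∅, and let σ̃ = [m] \ (σ ∪ ω). Then the Alexander dual of K_{σ,ω} relative to ω equals (K*)_{σ̃,ω}, i.e., (K_{σ,ω})* = (K*)_{σ̃,ω}. Here K_{σ,ω} = { ω ∩ η : η ∈ link_K(σ) } and for a complex L, L_{τ,ω} = { ω ∩ η : η ∈ link_L(τ) }. -/

import Mathlib

/-- A simplicial complex on vertex set contained in `[m] = Fin m`. -/
def IsSimplicialComplex {m : ℕ} (K : Set (Finset (Fin m))) : Prop :=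
  ∀ σ ∈ K, ∀ τ ⊆ σ, τ ∈ K

/-- `link_K(σ) = { η ∈ K : η ∪ σ ∈ K, η ∩ σ = ∅ }`. -/
def link {m : ℕ} (K : Set (Finset (Fin m))) (σ : Finset (Fin m)) : Set (Finset (Fin m)) :=
  {η | η ∈ K ∧ η ∪ σ ∈ K ∧ η ∩ σ = ∅}

/-- `K_{σ,ω} = { ω ∩ η : η ∈ link_K(σ) }`. -/
def linkRestrict {m : ℕ} (K : Set (Finset (Fin m))) (σ ω : Finset (Fin m)) :
    Set (Finset (Fin m)) :=
  {τ | ∃ η ∈ link K σ, τ = ω ∩ η}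

/-- The Alexander dual of a complex `L` on vertex set `⊆ ω`, relative to `ω`:
`L* = { ω\τ : τ ⊆ ω, τ ∉ L }`. -/
def alexanderDualRel {m : ℕ} (ω : Finset (Fin m)) (L : Set (Finset (Fin m))) :
    Set (Finset (Fin m)) :=
  {ρ | ρ ⊆ ω ∧ ω \ ρ ∉ L}

/-- The Alexander dual of `K` relative to `[m]`. -/
def alexanderDual {m : ℕ} (K : Set (Finset (Fin m))) : Set (Finset (Fin m)) :=
  {τ | τᶜ ∉ K}

/-! Since a simplicial complex is closed under subsets, `τ ∈ K_{σ,ω}` holds exactly when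
`τ ⊆ ω`, `τ ∩ σ = ∅` and `τ ∪ σ ∈ K`. The dual `K*` is again closed under subsets, and for
`ρ ⊆ ω` the complement of `ρ ∪ σ̃` is `(ω \ ρ) ∪ σ`; so both sides consist of the `ρ ⊆ ω`
with `(ω \ ρ) ∪ σ ∉ K`. -/

theorem IsSimplicialComplex.alexanderDual {m : ℕ} {K : Set (Finset (Fin m))}
    (hK : IsSimplicialComplex K) : IsSimplicialComplex (alexanderDual K) :=
  fun _ hσ _ hτσ hτ => hσ (hK _ hτ _ (Finset.compl_subset_compl.mpr hτσ))

theorem mem_linkRestrict_iff {m : ℕ} {K : Set (Finset (Fin m))} (hK : IsSimplicialComplex K)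
    {σ ω τ : Finset (Fin m)} :
    τ ∈ linkRestrict K σ ω ↔ τ ⊆ ω ∧ Disjoint τ σ ∧ τ ∪ σ ∈ K := by
  constructor
  · rintro ⟨η, ⟨-, hησ, hησ_disj⟩, rfl⟩
    refine ⟨Finset.inter_subset_left, ?_, hK _ hησ _ ?_⟩
    · exact (Finset.disjoint_iff_inter_eq_empty.mpr hησ_disj).mono_left Finset.inter_subset_right
    · exact Finset.union_subset_union Finset.inter_subset_right le_rfl
  · rintro ⟨hτω, hτσ, hτ⟩
    exact ⟨τ, ⟨hK _ hτ _ Finset.subset_union_left, hτ, Finset.disjoint_iff_inter_eq_empty.mp hτσ⟩,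
      (Finset.inter_eq_right.mpr hτω).symm⟩

theorem Finset.compl_union_compl_union_eq_sdiff_union {α : Type*} [Fintype α] [DecidableEq α]
    {ρ σ ω : Finset α} (hρσ : Disjoint ρ σ) : (ρ ∪ (σ ∪ ω)ᶜ)ᶜ = (ω \ ρ) ∪ σ := by
  ext x
  have := @Finset.disjoint_left.mp hρσ x
  simp only [Finset.mem_compl, Finset.mem_union, Finset.mem_sdiff]
  tauto

theorem alexanderDualRel_linkRestrict_general {m : ℕ} (K : Set (Finset (Fin m)))
    (hK : IsSimplicialComplex K) (σ ω : Finset (Fin m)) (hσω : σ ∩ ω = ∅) :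
    alexanderDualRel ω (linkRestrict K σ ω) =
      linkRestrict (alexanderDual K) (σ ∪ ω)ᶜ ω := by
  have hσω_disj : Disjoint σ ω := Finset.disjoint_iff_inter_eq_empty.mpr hσω
  ext ρ
  rw [mem_linkRestrict_iff hK.alexanderDual]
  simp only [alexanderDualRel, Set.mem_ofPred_eq, mem_linkRestrict_iff hK, alexanderDual]
  refine and_congr_right fun hρω => ?_
  have hρσ : Disjoint ρ σ := hσω_disj.symm.mono_left hρω
  have hρσω : Disjoint ρ (σ ∪ ω)ᶜ :=
    disjoint_compl_right_iff.mpr (hρω.trans Finset.subset_union_right)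
  rw [Finset.compl_union_compl_union_eq_sdiff_union hρσ]
  simp only [Finset.sdiff_subset, hσω_disj.symm.mono_left Finset.sdiff_subset, hρσω, true_and]

/-- `(K_{σ,ω})* = (K*)_{σ̃,ω}` where `σ̃ = [m]\(σ ∪ ω)` and the left
Alexander dual is taken relative to `ω`. -/
theorem alexanderDualRel_linkRestrict {m : ℕ} (K : Set (Finset (Fin m)))
    (hK : IsSimplicialComplex K) (σ ω : Finset (Fin m)) (hσ : σ ∈ K) (hσω : σ ∩ ω = ∅) :
    alexanderDualRel ω (linkRestrict K σ ω) =
      linkRestrict (alexanderDual K) (σ ∪ ω)ᶜ ω :=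
  alexanderDualRel_linkRestrict_general K hK σ ω hσω
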